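/- arXiv:2501.12930 — 8 statements merged into one kernel-verified Lean document; each statement's English description precedes it below -/
import Mathlib

section
/- Let S be a semigroup in which the identity xy = (xy)^3 holds, i.e., for all x, y ∈ S one has x*y = x*y*x*y*x*y. Then S satisfies the identity xyyxyx = xyxyyx; that is, for all a, b ∈ S, a*b*b*a*b*a = a*b*a*b*b*a. -/
/-- In any semigroup satisfying the identity `xy = (xy)^3`
(i.e. `x*y = x*y*x*y*x*y`), the identity `xyyxyx = xyxyyx` holds. -/
theorem stmt_0 {S : Type*} [Semigroup S]
    (h : ∀ x y : S, x * y = x * y * x * y * x * y) :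
    ∀ a b : S, a * b * b * a * b * a = a * b * a * b * b * a := by
  intro a b
  simp only [mul_assoc]
  calc a*(b*(b*(a*(b*(a))))) = a*(b*(a*(b*(a*(b*(b*(a*(b*(a))))))))) := by
        simpa only [mul_assoc] using congrArg (fun z => z * (b*a*b*a)) (h a (b))
    _ = a*(b*(a*(b*(a*(b*(b*(a*(b*(a*(b*(a*(b*(a))))))))))))) := by
        simpa only [mul_assoc] using congrArg (fun z => a*b*a*b*a*b * z * (b*a)) (h b (a))
    _ = a*(b*(a*(b*(a*(b*(b*(a*(b*(a*(b*(b*(a*(b*(b*(a*(b*(a*(b*(a))))))))))))))))))) := by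
        simpa only [mul_assoc] using congrArg (fun z => a*b*a*b*a*b*b*a * z * (a*b*a)) (h b (a*b))
    _ = a*(b*(a*(b*(a*(b*(b*(a*(b*(a*(b*(b*(a*(b*(b*(a))))))))))))))) := by
        simpa only [mul_assoc] using (congrArg (fun z => a*b*a*b*a*b*b*a*b*a*b*b*a*b * z) (h b (a))).symm
    _ = a*(b*(a*(b*(a*(b*(b*(a*(b*(a*(b*(b*(a*(b*(a*(b*(a*(b*(b*(a))))))))))))))))))) := by
        simpa only [mul_assoc] using congrArg (fun z => a*b*a*b*a*b*b*a*b*a*b * z * (b*b*a)) (h b (a))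
    _ = a*(b*(a*(b*(a*(b*(a*(b*(b*(a))))))))) := by
        simpa only [mul_assoc] using (congrArg (fun z => a * z * (a*b*b*a)) (h b (a*b*a*b))).symm
    _ = a*(b*(a*(b*(b*(a))))) := by
        simpa only [mul_assoc] using (congrArg (fun z => z * (a*b*b*a)) (h a (b))).symm
end

section
/- Let F be the free semigroup on three generators a, b, c, and let c₀ be the smallest congruence on F containing the pair (st, stst) for all elements s, t ∈ F (i.e., all substitution instances of the identity xy = (xy)²). Then the images in the quotient F/c₀ of the six words abcb², abca, abc², abcab, abc, abcb are pairwise distinct. -/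
/-- All substitution instances of the identity `xy = (xy)²`. -/
def m1Rel : FreeSemigroup (Fin 3) → FreeSemigroup (Fin 3) → Prop := fun u v =>
  ∃ s t : FreeSemigroup (Fin 3), u = s * t ∧ v = s * t * (s * t)

/-!
The six words end in the pairwise distinct two-letter suffixes `bb, ca, cc, ab, bc, cb`. Keeping
only the last two letters of a word is a morphism onto a semigroup satisfying `xy = (xy)²` (the
suffix of `xyxy` is that of `xy` as soon as `xy` has length at least two), so it factors through
the relatively free semigroup and separates the six images there.
-/

/-- A word of length one is `inl a`; a longer word is `inr (a, b)` with `a b` its last letters. -/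
def LastTwo (α : Type*) : Type _ := α ⊕ α × α

namespace LastTwo

variable {α : Type*}

instance [DecidableEq α] : DecidableEq (LastTwo α) :=
  inferInstanceAs (DecidableEq (α ⊕ α × α))

def last : LastTwo α → α
  | .inl a => a
  | .inr p => p.2

instance : Semigroup (LastTwo α) where
  mul x y := match y with
    | .inl b => .inr (x.last, b)
    | .inr p => .inr p
  mul_assoc x y z := by
    cases z with
    | inr p => rfl
    | inl c => cases y <;> rfl

theorem mul_mul_self_eq (x y : LastTwo α) : x * y * (x * y) = x * y := by
  cases y <;> rfl

def ofWord : FreeSemigroup α →ₙ* LastTwo α :=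
  FreeSemigroup.lift Sum.inl

end LastTwo

theorem conGen_m1Rel_le_ker {S : Type*} [Semigroup S]
    (hS : ∀ x y : S, x * y * (x * y) = x * y) (f : FreeSemigroup (Fin 3) →ₙ* S) :
    conGen m1Rel ≤ Con.ker f := by
  refine Con.conGen_le.2 ?_
  rintro _ _ ⟨s, t, rfl, rfl⟩
  show f (s * t) = f (s * t * (s * t))
  simp only [map_mul, hS]

theorem conGen_m1Rel_mk_ne_of_map_ne {S : Type*} [Semigroup S]
    (hS : ∀ x y : S, x * y * (x * y) = x * y) (f : FreeSemigroup (Fin 3) →ₙ* S)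
    {u v : FreeSemigroup (Fin 3)} (h : f u ≠ f v) :
    (u : (conGen m1Rel).Quotient) ≠ v :=
  fun huv => h (conGen_m1Rel_le_ker hS f ((Con.eq _).1 huv))

/-- In the free semigroup on three generators `a b c` modulo the smallest
congruence generated by all instances of `xy = (xy)²`, the images of the
words `abcb²`, `abca`, `abc²`, `abcab`, `abc`, `abcb` are pairwise distinct. -/
theorem stmt_7 :
    let a := FreeSemigroup.of (0 : Fin 3)
    let b := FreeSemigroup.of (1 : Fin 3)
    let c := FreeSemigroup.of (2 : Fin 3)
    ([a * b * c * b * b, a * b * c * a, a * b * c * c,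
      a * b * c * a * b, a * b * c, a * b * c * b].map
        (fun w => (w : (conGen m1Rel).Quotient))).Pairwise (· ≠ ·) := by
  intro a b c
  -- the coercion in the statement elaborates as a lift through the list monad, then `map id`
  rw [List.map_id', bind_pure_comp, List.map_eq_map, List.pairwise_map]
  refine .imp (conGen_m1Rel_mk_ne_of_map_ne LastTwo.mul_mul_self_eq LastTwo.ofWord) ?_
  decide
end

section
/- Let F be the free semigroup on three generators a, b, c, and let c₀ be the smallest congruence on F containing, for all elements x₁, x₂, x₃, x₄, x, y ∈ F, the pairs (x₁x₂x₃x₄, x₂x₃x₁x₄), (x²y, xyx), (xyx, yx²), and (yx², x³y). Then the images in the quotient F/c₀ of the six words a, b, c, a², b², c² are pairwise distinct. -/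
/-- All substitution instances of the identities
`x₁x₂x₃x₄ = x₂x₃x₁x₄`, `x²y = xyx`, `xyx = yx²`, `yx² = x³y`. -/
def m4Rel : FreeSemigroup (Fin 3) → FreeSemigroup (Fin 3) → Prop := fun u v =>
  (∃ x₁ x₂ x₃ x₄ : FreeSemigroup (Fin 3),
      u = x₁ * x₂ * x₃ * x₄ ∧ v = x₂ * x₃ * x₁ * x₄) ∨
  (∃ x y : FreeSemigroup (Fin 3), u = x * x * y ∧ v = x * y * x) ∨
  (∃ x y : FreeSemigroup (Fin 3), u = x * y * x ∧ v = y * (x * x)) ∨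
  (∃ x y : FreeSemigroup (Fin 3), u = y * (x * x) ∧ v = x * x * x * y)

/-!
Both sides of every defining identity are words of length at least `3`, and the words of
length at least `3` form an ideal. So `conGen m4Rel` lies below the Rees congruence of that
ideal, which identifies no two distinct words of length at most `2`.
-/

namespace FreeSemigroup

variable {α : Type*}

lemma one_le_length (x : FreeSemigroup α) : 1 ≤ x.length :=
  Nat.le_add_left 1 _

lemma three_le_length_mul_mul (x y z : FreeSemigroup α) : 3 ≤ (x * y * z).length := by
  simp only [length_mul]
  have := x.one_le_length; have := y.one_le_length; have := z.one_le_length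
  omega

def reesLengthCon (α : Type*) (n : ℕ) : Con (FreeSemigroup α) where
  r u v := u = v ∨ (n ≤ u.length ∧ n ≤ v.length)
  iseqv :=
    { refl _ := Or.inl rfl
      symm := by rintro _ _ (rfl | ⟨hu, hv⟩) <;> simp_all
      trans := by rintro _ _ _ (rfl | ⟨hu, hv⟩) (rfl | ⟨hv', hw⟩) <;> simp_all }
  mul' := by
    rintro u v w x (rfl | ⟨hu, hv⟩) (rfl | ⟨hw, hx⟩)
    · exact Or.inl rfl
    all_goals right; simp only [length_mul]; omega

lemma eq_of_reesLengthCon {n : ℕ} {u v : FreeSemigroup α} (h : reesLengthCon α n u v)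
    (hu : u.length < n) : u = v :=
  h.resolve_right fun h' => hu.not_ge h'.1

end FreeSemigroup

open FreeSemigroup

lemma m4Rel_le_reesLengthCon : m4Rel ≤ ⇑(reesLengthCon (Fin 3) 3) := by
  rintro u v (⟨x₁, x₂, x₃, x₄, rfl, rfl⟩ | ⟨x, y, rfl, rfl⟩ | ⟨x, y, rfl, rfl⟩ | ⟨x, y, rfl, rfl⟩)
  all_goals
    try rw [← mul_assoc]
    exact Or.inr ⟨three_le_length_mul_mul _ _ _, three_le_length_mul_mul _ _ _⟩

lemma eq_of_mk_eq_of_length_lt_three {u v : FreeSemigroup (Fin 3)} (hu : u.length < 3)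
    (h : (u : (conGen m4Rel).Quotient) = v) : u = v :=
  eq_of_reesLengthCon (Con.conGen_le.mpr m4Rel_le_reesLengthCon <| (Con.eq _).mp h) hu

/-- In the free semigroup on three generators `a b c` modulo the smallest
congruence generated by all instances of `x₁x₂x₃x₄ = x₂x₃x₁x₄` and
`x²y = xyx = yx² = x³y`, the images of `a`, `b`, `c`, `a²`, `b²`, `c²`
are pairwise distinct. -/
theorem stmt_9 :
    let a := FreeSemigroup.of (0 : Fin 3)
    let b := FreeSemigroup.of (1 : Fin 3)
    let c := FreeSemigroup.of (2 : Fin 3)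
    ([a, b, c, a * a, b * b, c * c].map
        (fun w => (w : (conGen m4Rel).Quotient))).Pairwise (· ≠ ·) := by
  intro a b c
  have hshort : ∀ w ∈ [a, b, c, a * a, b * b, c * c], w.length < 3 := by decide
  have hdistinct : [a, b, c, a * a, b * b, c * c].Pairwise (· ≠ ·) := by decide
  -- the coercion in the statement elaborates through the `List` monad, not `List.map`
  change ([a, b, c, a * a, b * b, c * c].map
    (fun w : FreeSemigroup (Fin 3) => (w : (conGen m4Rel).Quotient))).Pairwise _
  rw [List.pairwise_map]
  refine hdistinct.imp_of_mem fun hu _ huv h => ?_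
  exact huv (eq_of_mk_eq_of_length_lt_three (hshort _ hu) h)
end

section
/- Let F be the free semigroup on three generators a, b, c, and let c₀ be the smallest congruence on F containing, for all elements x₁, x₂, x₃, x₄, x, y ∈ F, the pairs (x₁x₂x₃x₄, x₂x₃x₁x₄), (x²y, yxy), and (yxy, yx²). Then the images in the quotient F/c₀ of the six words a, b, c, a², b², c² are pairwise distinct. -/
/-- All substitution instances of the identities
`x₁x₂x₃x₄ = x₂x₃x₁x₄`, `x²y = yxy`, `yxy = yx²`. -/
def m13Rel : FreeSemigroup (Fin 3) → FreeSemigroup (Fin 3) → Prop := fun u v =>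
  (∃ x₁ x₂ x₃ x₄ : FreeSemigroup (Fin 3),
      u = x₁ * x₂ * x₃ * x₄ ∧ v = x₂ * x₃ * x₁ * x₄) ∨
  (∃ x y : FreeSemigroup (Fin 3), u = x * x * y ∧ v = y * x * y) ∨
  (∃ x y : FreeSemigroup (Fin 3), u = y * x * y ∧ v = y * (x * x))

/-
Each identity of the variety relates two products of at least two factors with the same set of
letters. Hence the semigroup whose elements are the letters together with the finite sets of
letters, a product being the union of the letters involved, satisfies the identities. There `a`,
`b`, `c` evaluate to three distinct letters and `a²`, `b²`, `c²` to three distinct sets.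
-/

def LetterOrContent (α : Type*) := α ⊕ Finset α

namespace LetterOrContent

variable {α : Type*} [DecidableEq α]

instance : DecidableEq (LetterOrContent α) := instDecidableEqSum

def content : LetterOrContent α → Finset α
  | .inl i => {i}
  | .inr A => A

instance : Mul (LetterOrContent α) := ⟨fun u v => .inr (content u ∪ content v)⟩

theorem content_mul (u v : LetterOrContent α) : content (u * v) = content u ∪ content v := rfl

theorem mul_eq_mul {u v u' v' : LetterOrContent α}
    (h : content u ∪ content v = content u' ∪ content v') : u * v = u' * v' :=
  congrArg Sum.inr h

instance : Semigroup (LetterOrContent α) where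
  mul_assoc u v w := mul_eq_mul <| by rw [content_mul, content_mul, Finset.union_assoc]

theorem mul_rotate_mul (x₁ x₂ x₃ x₄ : LetterOrContent α) :
    x₁ * x₂ * x₃ * x₄ = x₂ * x₃ * x₁ * x₄ :=
  mul_eq_mul <| by simp only [content_mul]; grind

theorem mul_self_mul (x y : LetterOrContent α) : x * x * y = y * x * y :=
  mul_eq_mul <| by simp only [content_mul]; grind

theorem mul_mul_eq_mul_mul_self (x y : LetterOrContent α) : y * x * y = y * (x * x) :=
  mul_eq_mul <| by simp only [content_mul]; grind

end LetterOrContent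

theorem conGen_m13Rel_le_ker {S : Type*} [Semigroup S]
    (hrot : ∀ x₁ x₂ x₃ x₄ : S, x₁ * x₂ * x₃ * x₄ = x₂ * x₃ * x₁ * x₄)
    (hsq : ∀ x y : S, x * x * y = y * x * y) (hsq' : ∀ x y : S, y * x * y = y * (x * x))
    (f : FreeSemigroup (Fin 3) →ₙ* S) : conGen m13Rel ≤ Con.ker f := by
  rw [Con.conGen_le]
  rintro _ _ (⟨x₁, x₂, x₃, x₄, rfl, rfl⟩ | ⟨x, y, rfl, rfl⟩ | ⟨x, y, rfl, rfl⟩) <;>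
    simp only [Con.ker_rel, map_mul]
  exacts [hrot .., hsq .., hsq' ..]

/-- In the free semigroup on three generators `a b c` modulo the smallest
congruence generated by all instances of `x₁x₂x₃x₄ = x₂x₃x₁x₄` and
`x²y = yxy = yx²`, the images of `a`, `b`, `c`, `a²`, `b²`, `c²`
are pairwise distinct. -/
theorem stmt_10 :
    let a := FreeSemigroup.of (0 : Fin 3)
    let b := FreeSemigroup.of (1 : Fin 3)
    let c := FreeSemigroup.of (2 : Fin 3)
    ([a, b, c, a * a, b * b, c * c].map
        (fun w => (w : (conGen m13Rel).Quotient))).Pairwise (· ≠ ·) := by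
  intro a b c
  let f : FreeSemigroup (Fin 3) →ₙ* LetterOrContent (Fin 3) := FreeSemigroup.lift Sum.inl
  have hker : conGen m13Rel ≤ Con.ker f := conGen_m13Rel_le_ker LetterOrContent.mul_rotate_mul
    LetterOrContent.mul_self_mul LetterOrContent.mul_mul_eq_mul_mul_self f
  have hsep : [a, b, c, a * a, b * b, c * c].Pairwise (fun u v => f u ≠ f v) := by decide
  -- The coercion in the statement elaborates the list as `l >>= pure ∘ (↑)`, which is
  -- `l.map (↑)` only up to unfolding, so the result is stated first and closed by `exact`.
  have hcoe := (List.pairwise_map (R := (· ≠ ·))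
    (f := ((↑) : FreeSemigroup (Fin 3) → (conGen m13Rel).Quotient))).2 <|
      hsep.imp fun hne heq => hne (hker ((Con.eq _).1 heq))
  exact hcoe
end

section
/- Let F be the free semigroup on three generators a, b, c, and let c₀ be the smallest congruence on F containing, for all elements x, y, z, t ∈ F, the pairs (xyzt, yxtz), (x²y, y²x), and (xy², (xy)²). Then the images in the quotient F/c₀ of the six words a², b², a³b, ab², a²b, a³ are pairwise distinct. -/
/-!
Every semigroup satisfying `xyzt = yxtz`, `x²y = y²x` and `xy² = (xy)²` is a quotient of the free
semigroup by a congruence containing `m42Rel`, so it suffices to exhibit one such semigroup in which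
the six words take pairwise distinct values. A twelve-element semigroup with zero does this.
-/

/-- All substitution instances of the identities
`xyzt = yxtz`, `x²y = y²x`, `xy² = (xy)²`. -/
def m42Rel : FreeSemigroup (Fin 3) → FreeSemigroup (Fin 3) → Prop := fun u v =>
  (∃ x y z t : FreeSemigroup (Fin 3), u = x * y * z * t ∧ v = y * x * t * z) ∨
  (∃ x y : FreeSemigroup (Fin 3), u = x * x * y ∧ v = y * y * x) ∨
  (∃ x y : FreeSemigroup (Fin 3), u = x * (y * y) ∧ v = x * y * (x * y))

theorem Con.coe_ne_coe_conGen_of_map_ne {M N : Type*} [Mul M] [Mul N] {r : M → M → Prop}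
    (f : M →ₙ* N) (hf : ∀ u v, r u v → f u = f v) {u v : M} (h : f u ≠ f v) :
    (u : (conGen r).Quotient) ≠ v := fun huv =>
  h ((Con.conGen_le (c := Con.ker f)).mpr hf ((Con.eq _).mp huv))

theorem MulHom.map_eq_of_m42Rel {S : Type*} [Semigroup S]
    (mul_mul_mul_swap : ∀ x y z t : S, x * y * z * t = y * x * t * z)
    (mul_self_mul_swap : ∀ x y : S, x * x * y = y * y * x)
    (mul_mul_self : ∀ x y : S, x * (y * y) = x * y * (x * y))
    (f : FreeSemigroup (Fin 3) →ₙ* S) {u v : FreeSemigroup (Fin 3)} (huv : m42Rel u v) :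
    f u = f v := by
  rcases huv with ⟨x, y, z, t, rfl, rfl⟩ | ⟨x, y, rfl, rfl⟩ | ⟨x, y, rfl, rfl⟩ <;>
    simp only [map_mul]
  exacts [mul_mul_mul_swap .., mul_self_mul_swap .., mul_mul_self ..]

/-- Under `a ↦ 0`, `b ↦ 1`, index `i < 11` is the value of the `i`-th word of
`a, b, a², ab, ba, b², a³, a²b, aba, ab², bab`, and `11` is a zero. -/
def M42Model := Fin 12

namespace M42Model

instance : DecidableEq M42Model := inferInstanceAs (DecidableEq (Fin 12))

instance : Fintype M42Model := inferInstanceAs (Fintype (Fin 12))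

def mulTable : Fin 12 → Fin 12 → Fin 12 :=
  ![![2, 3, 6, 7, 8, 9, 6, 11, 11, 11, 9, 11],
    ![4, 5, 9, 10, 7, 11, 11, 11, 9, 11, 11, 11],
    ![6, 7, 6, 11, 11, 11, 6, 11, 11, 11, 11, 11],
    ![8, 9, 11, 9, 11, 11, 11, 11, 11, 11, 11, 11],
    ![9, 10, 11, 11, 9, 11, 11, 11, 11, 11, 11, 11],
    ![7, 11, 11, 11, 11, 11, 11, 11, 11, 11, 11, 11],
    ![6, 11, 6, 11, 11, 11, 6, 11, 11, 11, 11, 11],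
    ![11, 11, 11, 11, 11, 11, 11, 11, 11, 11, 11, 11],
    ![11, 9, 11, 11, 11, 11, 11, 11, 11, 11, 11, 11],
    ![11, 11, 11, 11, 11, 11, 11, 11, 11, 11, 11, 11],
    ![9, 11, 11, 11, 11, 11, 11, 11, 11, 11, 11, 11],
    ![11, 11, 11, 11, 11, 11, 11, 11, 11, 11, 11, 11]]

instance : Semigroup M42Model where
  mul := mulTable
  mul_assoc := by decide +kernel

theorem mul_mul_mul_swap : ∀ x y z t : M42Model, x * y * z * t = y * x * t * z := by
  decide +kernel

theorem mul_self_mul_swap : ∀ x y : M42Model, x * x * y = y * y * x := by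
  decide +kernel

theorem mul_mul_self : ∀ x y : M42Model, x * (y * y) = x * y * (x * y) := by
  decide +kernel

def eval : FreeSemigroup (Fin 3) →ₙ* M42Model :=
  FreeSemigroup.lift (![0, 1, 11] : Fin 3 → Fin 12)

theorem coe_ne_coe_of_eval_ne {u v : FreeSemigroup (Fin 3)} (h : eval u ≠ eval v) :
    (u : (conGen m42Rel).Quotient) ≠ v :=
  Con.coe_ne_coe_conGen_of_map_ne eval
    (fun _ _ => eval.map_eq_of_m42Rel mul_mul_mul_swap mul_self_mul_swap mul_mul_self) h

end M42Model

/-- In the free semigroup on three generators `a b c` modulo the smallest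
congruence generated by all instances of `xyzt = yxtz`, `x²y = y²x`,
`xy² = (xy)²`, the images of `a²`, `b²`, `a³b`, `ab²`, `a²b`, `a³`
are pairwise distinct. -/
theorem stmt_11 :
    let a := FreeSemigroup.of (0 : Fin 3)
    let b := FreeSemigroup.of (1 : Fin 3)
    ([a * a, b * b, a * a * a * b, a * b * b, a * a * b, a * a * a].map
        (fun w => (w : (conGen m42Rel).Quotient))).Pairwise (· ≠ ·) := by
  intro a b
  -- the list literal is coerced elementwise through the list monad; restate it as a `map`
  show (List.map ((↑) : _ → (conGen m42Rel).Quotient)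
    [a * a, b * b, a * a * a * b, a * b * b, a * a * b, a * a * a]).Pairwise (· ≠ ·)
  rw [List.pairwise_map]
  refine .of_map M42Model.eval (fun _ _ => M42Model.coe_ne_coe_of_eval_ne) ?_
  simp only [a, b, List.map, map_mul, M42Model.eval]
  decide
end

section
/- Let F be the free semigroup on two generators a, b, and let c₀ be the smallest congruence on F containing, for all elements x, y, z, t ∈ F, the pairs (xyzt, yxtz), (x²y, (xy)²), and (xy², yx²). Then the images in the quotient F/c₀ of the six words a², aba, ab², ab, a²b, a³b are pairwise distinct. -/
/-- All substitution instances of the identities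
`xyzt = yxtz`, `x²y = (xy)²`, `xy² = yx²`. -/
def m43Rel : FreeSemigroup (Fin 2) → FreeSemigroup (Fin 2) → Prop := fun u v =>
  (∃ x y z t : FreeSemigroup (Fin 2), u = x * y * z * t ∧ v = y * x * t * z) ∨
  (∃ x y : FreeSemigroup (Fin 2), u = x * x * y ∧ v = x * y * (x * y)) ∨
  (∃ x y : FreeSemigroup (Fin 2), u = x * (y * y) ∧ v = y * (x * x))

/-!
The six words are separated by a finite semigroup of the variety: `M43Nil`, the quotient of the
2-generated free semigroup of `var{m43}` by its ideal generated by `a³` and `b³`, which is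
nilpotent with 11 elements. Since `M43Nil` satisfies the three identities, evaluation in it is
constant on `conGen m43Rel`-classes, and the six words evaluate to six different elements.
-/

structure SatisfiesM43 (S : Type*) [Mul S] : Prop where
  mul_mul_mul_swap : ∀ x y z t : S, x * y * z * t = y * x * t * z
  mul_self_mul : ∀ x y : S, x * x * y = x * y * (x * y)
  mul_mul_self : ∀ x y : S, x * (y * y) = y * (x * x)

section

variable {S : Type*} [Semigroup S]

theorem SatisfiesM43.conGen_le_ker (hS : SatisfiesM43 S) (f : FreeSemigroup (Fin 2) →ₙ* S) :
    conGen m43Rel ≤ Con.ker f := by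
  refine Con.conGen_le.2 ?_
  rintro u v (⟨x, y, z, t, rfl, rfl⟩ | ⟨x, y, rfl, rfl⟩ | ⟨x, y, rfl, rfl⟩) <;>
    simp only [Con.ker_rel, map_mul]
  exacts [hS.mul_mul_mul_swap .., hS.mul_self_mul .., hS.mul_mul_self ..]

theorem SatisfiesM43.coe_ne_of_map_ne (hS : SatisfiesM43 S) (f : FreeSemigroup (Fin 2) →ₙ* S)
    {u v : FreeSemigroup (Fin 2)} (h : f u ≠ f v) : (u : (conGen m43Rel).Quotient) ≠ v :=
  fun huv => h (hS.conGen_le_ker f ((conGen m43Rel).eq.mp huv))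

end

/-- The constructors are named by representatives; `aab = bba = (ab)² = (ba)²`, `abb = baa`,
and `zero` absorbs `a³`, `b³` and `a³b`. -/
inductive M43Nil : Type
  | a | b | aa | ab | ba | bb | aab | aba | abb | bab | zero
  deriving DecidableEq

namespace M43Nil

instance : Fintype M43Nil where
  elems := {a, b, aa, ab, ba, bb, aab, aba, abb, bab, zero}
  complete x := by cases x <;> decide

def mul : M43Nil → M43Nil → M43Nil
  | a, a => aa
  | a, b => ab
  | b, a => ba
  | b, b => bb
  | a, ab => aab
  | a, ba => aba
  | a, bb => abb
  | a, bab => aab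
  | b, aa => abb
  | b, ab => bab
  | b, ba => aab
  | b, aba => aab
  | aa, b => aab
  | ab, a => aba
  | ab, b => abb
  | ab, ab => aab
  | ba, a => abb
  | ba, b => bab
  | ba, ba => aab
  | bb, a => aab
  | aba, b => aab
  | bab, a => aab
  | _, _ => zero

instance : Semigroup M43Nil where
  mul := mul
  mul_assoc := by decide

theorem satisfiesM43 : SatisfiesM43 M43Nil :=
  ⟨by decide, by decide, by decide⟩

def eval : FreeSemigroup (Fin 2) →ₙ* M43Nil :=
  FreeSemigroup.lift ![a, b]

end M43Nil

/-- In the free semigroup on two generators `a b` modulo the smallest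
congruence generated by all instances of `xyzt = yxtz`, `x²y = (xy)²`,
`xy² = yx²`, the images of `a²`, `aba`, `ab²`, `ab`, `a²b`, `a³b`
are pairwise distinct. -/
theorem stmt_12 :
    let a := FreeSemigroup.of (0 : Fin 2)
    let b := FreeSemigroup.of (1 : Fin 2)
    ([a * a, a * b * a, a * b * b, a * b, a * a * b, a * a * a * b].map
        (fun w => (w : (conGen m43Rel).Quotient))).Pairwise (· ≠ ·) := by
  intro a b
  let words := [a * a, a * b * a, a * b * b, a * b, a * a * b, a * a * a * b]
  -- the statement elaborates its coercion as a monadic lift of the whole list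
  change (words.map fun w : FreeSemigroup (Fin 2) => (w : (conGen m43Rel).Quotient)).Pairwise
    (· ≠ ·)
  have h_eval : (words.map M43Nil.eval).Pairwise (· ≠ ·) := by decide
  rw [List.pairwise_map] at h_eval ⊢
  exact h_eval.imp (M43Nil.satisfiesM43.coe_ne_of_map_ne M43Nil.eval)
end

section
/- Let F be the free semigroup on two generators a, b, and let c₀ be the smallest congruence on F containing, for all elements x, y, z, t ∈ F, the pairs (xyzt, tzyx), (x²y, yx²), (xyx, yxy), and (x²yz, y²zx). Then the images in the quotient F/c₀ance of the six words a²b, aba, ab², ba, ab, a³b are pairwise distinct. -/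
/-- All substitution instances of the identities
`xyzt = tzyx`, `x²y = yx²`, `xyx = yxy`, `x²yz = y²zx`. -/
def m21Rel : FreeSemigroup (Fin 2) → FreeSemigroup (Fin 2) → Prop := fun u v =>
  (∃ x y z t : FreeSemigroup (Fin 2), u = x * y * z * t ∧ v = t * z * y * x) ∨
  (∃ x y : FreeSemigroup (Fin 2), u = x * x * y ∧ v = y * (x * x)) ∨
  (∃ x y : FreeSemigroup (Fin 2), u = x * y * x ∧ v = y * x * y) ∨
  (∃ x y z : FreeSemigroup (Fin 2), u = x * x * y * z ∧ v = y * y * z * x)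

/-!
Each defining identity either has both sides of length at least 4 or, when all variables are
letters, relates two words of length 3. Hence the words of length at least 4 form an ideal that
is a single class modulo the relations, and the Rees quotient by it is a 12-element semigroup
`TruncM21` in the variety: the two letters, the four words of length 2, the five classes
`{a³}, {b³}, {a²b, ba²}, {aba, bab}, {ab², b²a}` of length 3, and a zero. The six words have
pairwise distinct images there (`a³b` goes to zero), so they are already distinct in `F/c₀`.
-/

theorem Con.coe_ne_coe_of_map_ne {S M : Type*} [Mul S] [Mul M] {r : S → S → Prop}
    (f : S →ₙ* M) (hf : ∀ u v, r u v → f u = f v) {u v : S} (h : f u ≠ f v) :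
    (u : (conGen r).Quotient) ≠ v := fun huv =>
  h <| (Con.ker_rel f).mp <|
    Con.conGen_le.mpr (fun x y hxy => (Con.ker_rel f).mpr (hf x y hxy)) ((Con.eq _).mp huv)

structure IsM21 (M : Type*) [Semigroup M] : Prop where
  reverse : ∀ x y z t : M, x * y * z * t = t * z * y * x
  sq_comm : ∀ x y : M, x * x * y = y * (x * x)
  braid : ∀ x y : M, x * y * x = y * x * y
  sq_mul_mul : ∀ x y z : M, x * x * y * z = y * y * z * x

theorem IsM21.map_eq_of_m21Rel {M : Type*} [Semigroup M] (hM : IsM21 M)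
    (f : FreeSemigroup (Fin 2) →ₙ* M) {u v : FreeSemigroup (Fin 2)} (huv : m21Rel u v) :
    f u = f v := by
  rcases huv with ⟨x, y, z, t, rfl, rfl⟩ | ⟨x, y, rfl, rfl⟩ | ⟨x, y, rfl, rfl⟩ | ⟨x, y, z, rfl, rfl⟩ <;>
    simp only [map_mul]
  exacts [hM.reverse .., hM.sq_comm .., hM.braid .., hM.sq_mul_mul ..]

inductive TruncM21
  | a | b | aa | ab | ba | bb | aaa | aab | aba | abb | bbb | zero
  deriving DecidableEq

namespace TruncM21

instance : Fintype TruncM21 :=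
  Fintype.ofList [a, b, aa, ab, ba, bb, aaa, aab, aba, abb, bbb, zero]
    (by intro x; cases x <;> decide)

def ofWord : List (Fin 2) → TruncM21
  | [0] => a | [1] => b
  | [0, 0] => aa | [0, 1] => ab | [1, 0] => ba | [1, 1] => bb
  | [0, 0, 0] => aaa | [1, 1, 1] => bbb
  | [0, 0, 1] | [1, 0, 0] => aab
  | [0, 1, 0] | [1, 0, 1] => aba
  | [0, 1, 1] | [1, 1, 0] => abb
  | _ => zero

def word : TruncM21 → List (Fin 2)
  | a => [0] | b => [1]
  | aa => [0, 0] | ab => [0, 1] | ba => [1, 0] | bb => [1, 1]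
  | aaa => [0, 0, 0] | aab => [0, 0, 1] | aba => [0, 1, 0] | abb => [0, 1, 1]
  | bbb => [1, 1, 1]
  | zero => []

instance : Mul TruncM21 where
  mul
    | zero, _ => zero
    | _, zero => zero
    | x, y => ofWord (x.word ++ y.word)

instance : Semigroup TruncM21 where
  mul_assoc := by decide

theorem isM21 : IsM21 TruncM21 := ⟨by decide, by decide, by decide, by decide⟩

def ofFree : FreeSemigroup (Fin 2) →ₙ* TruncM21 := FreeSemigroup.lift fun i => ofWord [i]

end TruncM21

/-- In the free semigroup on two generators `a b` modulo the smallest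
congruence generated by all instances of `xyzt = tzyx`, `x²y = yx²`,
`xyx = yxy`, `x²yz = y²zx`, the images of `a²b`, `aba`, `ab²`, `ba`, `ab`, `a³b`
are pairwise distinct. -/
theorem stmt_13 :
    let a := FreeSemigroup.of (0 : Fin 2)
    let b := FreeSemigroup.of (1 : Fin 2)
    ([a * a * b, a * b * a, a * b * b, b * a, a * b, a * a * a * b].map
        (fun w => (w : (conGen m21Rel).Quotient))).Pairwise (· ≠ ·) := by
  intro a b
  have hmodel : [a * a * b, a * b * a, a * b * b, b * a, a * b, a * a * a * b].Pairwise
      (fun u v => TruncM21.ofFree u ≠ TruncM21.ofFree v) := by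
    decide
  -- the list coercion in the statement elaborates to `List.map id (l >>= fun w => pure ↑w)`
  simp only [List.map_id', bind_pure_comp, List.map_eq_map, List.pairwise_map]
  exact hmodel.imp <|
    Con.coe_ne_coe_of_map_ne _ fun _ _ => TruncM21.isM21.map_eq_of_m21Rel _
end

section
/- Let F be the free semigroup on two generators a, b, and let c₀ be the smallest congruence on F containing, for all elements x₁, x₂, x₃, x₄, x, y, z ∈ F, the pairs (x₁x₂x₃x₄, x₂x₃x₁x₄), (x²y, xyx), (xyx, yx²), (x³yz, xy³z), and (x⁶, x⁷). Then the images in the quotient F/c₀ of the six words a², ba, a²b², ab², a²b, a⁴b are pairwise distinct. -/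
/-! Give the letters positive weights and cap the total weight of a word at `6`. The identities
`x₁x₂x₃x₄ = x₂x₃x₁x₄` and `x²y = xyx = yx²` preserve weight, and so does `x³yz = xy³z` when `x`
and `y` have equal weight; otherwise both of its sides, like both sides of `x⁶ = x⁷`, weigh at
least `6`. So the capped weight is an invariant of the congruence. The length and the weight
counting `b` twice already separate the six words. -/

/-- All substitution instances of the identities
`x₁x₂x₃x₄ = x₂x₃x₁x₄`, `x²y = xyx`, `xyx = yx²`, `x³yz = xy³z`, `x⁶ = x⁷`. -/
def m5Rel : FreeSemigroup (Fin 2) → FreeSemigroup (Fin 2) → Prop := fun u v =>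
  (∃ x₁ x₂ x₃ x₄ : FreeSemigroup (Fin 2),
      u = x₁ * x₂ * x₃ * x₄ ∧ v = x₂ * x₃ * x₁ * x₄) ∨
  (∃ x y : FreeSemigroup (Fin 2), u = x * x * y ∧ v = x * y * x) ∨
  (∃ x y : FreeSemigroup (Fin 2), u = x * y * x ∧ v = y * (x * x)) ∨
  (∃ x y z : FreeSemigroup (Fin 2), u = x * x * x * y * z ∧ v = x * (y * y * y) * z) ∨
  (∃ x : FreeSemigroup (Fin 2),
      u = x * x * x * x * x * x ∧ v = x * x * x * x * x * x * x)

namespace FreeSemigroup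

variable {α : Type*}

def weight (w : α → ℕ) (x : FreeSemigroup α) : ℕ :=
  (lift (Multiplicative.ofAdd ∘ w) x).toAdd

@[simp]
theorem weight_mul (w : α → ℕ) (x y : FreeSemigroup α) :
    weight w (x * y) = weight w x + weight w y := by
  simp only [weight, map_mul, toAdd_mul]

theorem weight_pos {w : α → ℕ} (hw : ∀ a, 0 < w a) (x : FreeSemigroup α) : 0 < weight w x :=
  x.recOnMul hw fun a y _ _ => by rw [weight_mul]; exact Nat.add_pos_left (hw a) _

def cappedWeightCon (w : α → ℕ) (N : ℕ) : Con (FreeSemigroup α) where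
  r x y := min (weight w x) N = min (weight w y) N
  iseqv := ⟨fun _ => rfl, Eq.symm, Eq.trans⟩
  mul' _ _ := by simp only [weight_mul]; omega

end FreeSemigroup

open FreeSemigroup

theorem conGen_m5Rel_le_cappedWeightCon {w : Fin 2 → ℕ} (hw : ∀ i, 0 < w i) {N : ℕ}
    (hN : N ≤ 6) : conGen m5Rel ≤ cappedWeightCon w N := by
  refine Con.conGen_le.mpr ?_
  have hpos := weight_pos hw
  rintro u v (⟨x₁, x₂, x₃, x₄, rfl, rfl⟩ | ⟨x, y, rfl, rfl⟩ | ⟨x, y, rfl, rfl⟩ |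
      ⟨x, y, z, rfl, rfl⟩ | ⟨x, rfl, rfl⟩) <;>
    show min _ N = min _ N <;> simp only [weight_mul]
  · congr 1; ring
  · congr 1; ring
  · congr 1; ring
  · have := hpos x; have := hpos y; have := hpos z; omega
  · have := hpos x; omega

/-- In the free semigroup on two generators `a b` modulo the smallest
congruence generated by all instances of `x₁x₂x₃x₄ = x₂x₃x₁x₄`,
`x²y = xyx = yx²`, `x³yz = xy³z`, `x⁶ = x⁷`, the images of
`a²`, `ba`, `a²b²`, `ab²`, `a²b`, `a⁴b` are pairwise distinct. -/
theorem stmt_14 :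
    let a := FreeSemigroup.of (0 : Fin 2)
    let b := FreeSemigroup.of (1 : Fin 2)
    ([a * a, b * a, a * a * b * b, a * b * b, a * a * b, a * a * a * a * b].map
        (fun w => (w : (conGen m5Rel).Quotient))).Pairwise (· ≠ ·) := by
  intro a b
  let invariant (u : FreeSemigroup (Fin 2)) : ℕ × ℕ :=
    (min (weight ![1, 1] u) 6, min (weight ![1, 2] u) 6)
  have h_separated : [a * a, b * a, a * a * b * b, a * b * b, a * a * b,
      a * a * a * a * b].Pairwise (fun u v => invariant u ≠ invariant v) := by
    decide
  simp only [bind_pure_comp, List.map_eq_map, List.pairwise_map]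
  refine h_separated.imp fun {u v} hne heq => hne ?_
  have huv := (Con.eq _).mp heq
  exact Prod.ext (conGen_m5Rel_le_cappedWeightCon (by decide) le_rfl huv)
    (conGen_m5Rel_le_cappedWeightCon (by decide) le_rfl huv)
end
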